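/- arXiv:2202.00429 — 4 statements merged into one kernel-verified Lean document; each statement's English description precedes it below -/
import Mathlib

section
/- Let f : ℝ^n → ℝ be convex, twice continuously differentiable, and symmetric under permutations of the coordinates. Let λ ∈ ℝ^n have pairwise distinct entries, and let B be an n×n complex Hermitian matrix. Then Σ_{a,b} (∂²f/∂λ_a∂λ_b)(λ) · Re(B_{aa}) · Re(B_{bb}) + Σ_{a≠b} ((∂f/∂λ_a(λ) − ∂f/∂λ_b(λ))/(λ_a − λ_b)) · |B_{ab}|² ≥ 0. -/
/-!
Along a line the directional derivative of a convex function is monotone. This gives at once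
the nonnegativity of the second directional derivative `D²f(λ)(e, e)` with `e = (Re B_aa)_a`,
which is the first sum. For the second sum, monotonicity between `λ` and `λ ∘ (a b)` in the
direction `u = λ ∘ (a b) - λ`, together with the symmetry `Df(λ ∘ (a b)) u = -Df(λ) u`, gives
`(∂_a f(λ) - ∂_b f(λ)) (λ_a - λ_b) ≥ 0`, so every divided difference is nonnegative.
-/

open Set

section Convex

variable {E : Type*} [NormedAddCommGroup E] [NormedSpace ℝ E] {f : E → ℝ}

theorem DifferentiableAt.hasDerivAt_comp_line {x d : E} {t : ℝ}
    (hf : DifferentiableAt ℝ f (x + t • d)) :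
    HasDerivAt (fun s : ℝ => f (x + s • d)) (fderiv ℝ f (x + t • d) d) t := by
  have hline : HasDerivAt (fun s : ℝ => x + s • d) d t := by
    simpa using ((hasDerivAt_id t).smul_const d).const_add x
  exact hf.hasFDerivAt.comp_hasDerivAt t hline

theorem fderiv_fderiv_apply {x : E} (hf : DifferentiableAt ℝ (fderiv ℝ f) x) (v w : E) :
    fderiv ℝ (fun y => fderiv ℝ f y w) x v = fderiv ℝ (fderiv ℝ f) x v w := by
  simp [fderiv_clm_apply hf (differentiableAt_const w)]

theorem ConvexOn.comp_line (hf : ConvexOn ℝ univ f) (x d : E) :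
    ConvexOn ℝ univ fun t : ℝ => f (x + t • d) := by
  have hlin : (fun t : ℝ => f (x + t • d)) = f ∘ AffineMap.lineMap x (x + d) := by
    funext t
    simp [AffineMap.lineMap_apply, add_comm]
  simpa [hlin] using hf.comp_affineMap (AffineMap.lineMap x (x + d))

theorem ConvexOn.monotone_fderiv_line (hf : ConvexOn ℝ univ f) (hd : Differentiable ℝ f)
    (x d : E) : Monotone fun t : ℝ => fderiv ℝ f (x + t • d) d := by
  have hderiv : (deriv fun t : ℝ => f (x + t • d)) = fun t => fderiv ℝ f (x + t • d) d :=
    funext fun t => (hd _).hasDerivAt_comp_line.deriv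
  rw [← hderiv, ← monotoneOn_univ]
  exact (hf.comp_line x d).monotoneOn_deriv fun t _ => (hd _).hasDerivAt_comp_line.differentiableAt

theorem ConvexOn.fderiv_apply_sub_le (hf : ConvexOn ℝ univ f) (hd : Differentiable ℝ f)
    (x y : E) : fderiv ℝ f x (y - x) ≤ fderiv ℝ f y (y - x) := by
  simpa using hf.monotone_fderiv_line hd x (y - x) zero_le_one

theorem ConvexOn.fderiv_fderiv_apply_self_nonneg (hf : ConvexOn ℝ univ f)
    (hd : Differentiable ℝ f) {x : E} (hd2 : DifferentiableAt ℝ (fderiv ℝ f) x) (d : E) :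
    0 ≤ fderiv ℝ (fderiv ℝ f) x d d := by
  rw [← fderiv_fderiv_apply hd2]
  have hline : HasDerivAt (fun t : ℝ => fderiv ℝ f (x + t • d) d)
      (fderiv ℝ (fun y => fderiv ℝ f y d) x d) 0 := by
    simpa using DifferentiableAt.hasDerivAt_comp_line (f := fun y => fderiv ℝ f y d) (t := 0)
      (by simpa using hd2.clm_apply (differentiableAt_const d))
  exact hline.nonneg_of_monotone (hf.monotone_fderiv_line hd x d)

end Convex

theorem ContinuousLinearMap.apply_apply_eq_sum_sum_single {ι : Type*} [Fintype ι]
    [DecidableEq ι] (G : (ι → ℝ) →L[ℝ] (ι → ℝ) →L[ℝ] ℝ) (c : ι → ℝ) :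
    G c c = ∑ a, ∑ b, G (Pi.single a 1) (Pi.single b 1) * c a * c b := by
  have hsingle : ∀ a, Pi.single a (c a) = c a • (Pi.single a 1 : ι → ℝ) := fun a => by
    rw [← Pi.single_smul', smul_eq_mul, mul_one]
  conv_lhs => rw [← Finset.univ_sum_single c]
  simp only [hsingle, map_sum, map_smul, FunLike.coe_sum, Finset.sum_apply,
    FunLike.coe_smul, Pi.smul_apply, smul_eq_mul, Finset.mul_sum]
  rw [Finset.sum_comm]
  exact Finset.sum_congr rfl fun a _ => Finset.sum_congr rfl fun b _ => by ring

section Symmetric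

variable {ι : Type*} [Fintype ι] {f : (ι → ℝ) → ℝ}

theorem fderiv_apply_comp_perm (hsymm : ∀ (σ : Equiv.Perm ι) (x : ι → ℝ), f (x ∘ σ) = f x)
    (hd : Differentiable ℝ f) (σ : Equiv.Perm ι) (x v : ι → ℝ) :
    fderiv ℝ f (x ∘ σ) (v ∘ σ) = fderiv ℝ f x v := by
  have hline : (fun t : ℝ => f (x ∘ σ + t • v ∘ σ)) = fun t => f (x + t • v) :=
    funext fun t => hsymm σ (x + t • v)
  have h := (hd _).hasDerivAt_comp_line (x := x ∘ σ) (d := v ∘ σ) (t := 0)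
  rw [hline] at h
  simpa using h.unique ((hd _).hasDerivAt_comp_line (t := 0))

theorem ConvexOn.fderiv_single_sub_mul_sub_nonneg [DecidableEq ι] (hf : ConvexOn ℝ univ f)
    (hd : Differentiable ℝ f) (hsymm : ∀ (σ : Equiv.Perm ι) (x : ι → ℝ), f (x ∘ σ) = f x)
    (x : ι → ℝ) (a b : ι) :
    0 ≤ (fderiv ℝ f x (Pi.single a 1) - fderiv ℝ f x (Pi.single b 1)) * (x a - x b) := by
  set s := Equiv.swap a b
  set u := x ∘ s - x
  have hus : (-u) ∘ s = u := by
    funext j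
    simp [u, s, Equiv.swap_apply_self]
  have hflip : fderiv ℝ f (x ∘ s) u = -fderiv ℝ f x u := by
    simpa [hus] using fderiv_apply_comp_perm hsymm hd s x (-u)
  have hu : u = (x b - x a) • (Pi.single a 1 - Pi.single b 1) := by
    funext j
    rcases eq_or_ne j a with rfl | hja
    · rcases eq_or_ne j b with rfl | hjb
      · simp [u, s]
      · simp [u, s, hjb]
    · rcases eq_or_ne j b with rfl | hjb
      · simp [u, s, hja]
      · simp [u, s, hja, hjb, Equiv.swap_apply_of_ne_of_ne]
  have hle : fderiv ℝ f x u ≤ fderiv ℝ f (x ∘ s) u := hf.fderiv_apply_sub_le hd x (x ∘ s)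
  rw [hflip, hu, map_smul, map_sub, smul_eq_mul] at hle
  linarith

end Symmetric

theorem spectral_hessian_nonneg_general (n : ℕ) (f : (Fin n → ℝ) → ℝ)
    (hconv : ConvexOn ℝ Set.univ f)
    (hreg : ContDiff ℝ 2 f)
    (hsymm : ∀ (σ : Equiv.Perm (Fin n)) (x : Fin n → ℝ), f (x ∘ σ) = f x)
    (lam : Fin n → ℝ)
    (B : Matrix (Fin n) (Fin n) ℂ) :
    0 ≤ (∑ a, ∑ b, fderiv ℝ (fun x => fderiv ℝ f x (Pi.single b 1)) lam (Pi.single a 1)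
            * (B a a).re * (B b b).re)
      + ∑ a, ∑ b, (if a ≠ b then
          ((fderiv ℝ f lam (Pi.single a 1) - fderiv ℝ f lam (Pi.single b 1)) / (lam a - lam b))
            * ‖B a b‖ ^ 2 else 0) := by
  have hd : Differentiable ℝ f := hreg.differentiable two_ne_zero
  have hd2 : Differentiable ℝ (fderiv ℝ f) :=
    (hreg.fderiv_right (m := 1) le_rfl).differentiable one_ne_zero
  refine add_nonneg ?_ (Finset.sum_nonneg fun a _ => Finset.sum_nonneg fun b _ => ?_)
  · have hhess := hconv.fderiv_fderiv_apply_self_nonneg hd (hd2 lam) fun a => (B a a).re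
    rw [ContinuousLinearMap.apply_apply_eq_sum_sum_single] at hhess
    simpa only [fderiv_fderiv_apply (hd2 lam)] using hhess
  · split_ifs
    · refine mul_nonneg (div_nonneg_iff.2 (mul_nonneg_iff.1 ?_)) (sq_nonneg _)
      exact hconv.fderiv_single_sub_mul_sub_nonneg hd hsymm lam a b
    · rfl

/-- The Lewis–Sendov Hessian quadratic form of a convex, C², permutation-symmetric
function `f : ℝⁿ → ℝ`, evaluated at a point with pairwise distinct entries against a
Hermitian matrix `B`, is nonnegative. -/
theorem spectral_hessian_nonneg (n : ℕ) (f : (Fin n → ℝ) → ℝ)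
    (hconv : ConvexOn ℝ Set.univ f)
    (hreg : ContDiff ℝ 2 f)
    (hsymm : ∀ (σ : Equiv.Perm (Fin n)) (x : Fin n → ℝ), f (x ∘ σ) = f x)
    (lam : Fin n → ℝ) (hlam : Function.Injective lam)
    (B : Matrix (Fin n) (Fin n) ℂ) (hB : B.IsHermitian) :
    0 ≤ (∑ a, ∑ b, fderiv ℝ (fun x => fderiv ℝ f x (Pi.single b 1)) lam (Pi.single a 1)
            * (B a a).re * (B b b).re)
      + ∑ a, ∑ b, (if a ≠ b then
          ((fderiv ℝ f lam (Pi.single a 1) - fderiv ℝ f lam (Pi.single b 1)) / (lam a - lam b))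
            * ‖B a b‖ ^ 2 else 0) :=
  spectral_hessian_nonneg_general n f hconv hreg hsymm lam B
end

section
/- Let k : ℝ → ℝ be differentiable, convex and non-decreasing on (0,∞). Let λ_a, λ_b > 0 with λ_a ≠ λ_b, let ξ_a, ξ_b ∈ ℂ, and set S = (k'(λ_a) − k'(λ_b))/(λ_a − λ_b). Then (λ_b·S + k'(λ_a)) · ((λ_a+λ_b)/2 · |ξ_a|²|ξ_b|² + √(λ_a λ_b) · Re(ξ_a² · conj(ξ_b)²)) + (λ_a·S + k'(λ_b)) · ((λ_a+λ_b)/2 · |ξ_a|²|ξ_b|² + √(λ_a λ_b) · Re(ξ_b² · conj(ξ_a)²)) ≥ ((λ_a+λ_b)·S + k'(λ_a) + k'(λ_b)) · ((λ_a+λ_b)/2 − √(λ_a λ_b)) · |ξ_a|²|ξ_b|² ≥ 0. -/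
/-!
Both coefficients `λ_b S + k'(λ_a)` and `λ_a S + k'(λ_b)` are nonnegative: `k' ≥ 0` because `k`
is non-decreasing, and `S ≥ 0` because `S` is a difference quotient of `k'`, which is monotone by
convexity. Bounding each `Re(ξ² conj(ξ')²)` below by `-|ξ_a|²|ξ_b|²` and adding the two terms
gives the first inequality; the second is AM–GM, `√(λ_a λ_b) ≤ (λ_a + λ_b)/2`.
-/

open Filter Topology

theorem HasDerivAt.nonneg_of_monotoneOn_of_mem_nhds {𝕜 : Type*} [NontriviallyNormedField 𝕜]
    [LinearOrder 𝕜] [IsStrictOrderedRing 𝕜] [OrderTopology 𝕜] {g : 𝕜 → 𝕜} {g' x : 𝕜}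
    {s : Set 𝕜} (hd : HasDerivAt g g' x) (hg : MonotoneOn g s) (hs : s ∈ 𝓝 x) : 0 ≤ g' := by
  have hacc : AccPt x (𝓟 s) := by
    simpa using (PerfectSpace.univ_preperfect x (Set.mem_univ x)).nhds_inter hs
  exact hd.hasDerivWithinAt.nonneg_of_monotoneOn hacc hg

theorem ConvexOn.monotoneOn_of_hasDerivAt {S : Set ℝ} {f f' : ℝ → ℝ} (hfc : ConvexOn ℝ S f)
    (hf : ∀ x ∈ S, HasDerivAt f (f' x) x) : MonotoneOn f' S :=
  (hfc.monotoneOn_deriv fun x hx ↦ (hf x hx).differentiableAt).congr fun x hx ↦ (hf x hx).deriv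

theorem Real.sqrt_mul_le_add_div_two {x y : ℝ} (hxy : 0 ≤ x + y) : √(x * y) ≤ (x + y) / 2 :=
  Real.sqrt_le_iff.2 ⟨by linarith, by nlinarith [sq_nonneg (x - y)]⟩

theorem Complex.neg_norm_sq_mul_norm_sq_le_re (z w : ℂ) :
    -(‖z‖ ^ 2 * ‖w‖ ^ 2) ≤ (z ^ 2 * (starRingEnd ℂ w) ^ 2).re := by
  have h := (abs_le.1 (Complex.abs_re_le_norm (z ^ 2 * (starRingEnd ℂ w) ^ 2))).1
  rwa [norm_mul, norm_pow, norm_pow, Complex.norm_conj] at h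

theorem mul_sub_mul_le_of_neg_le {c₁ c₂ s r₁ r₂ : ℝ} (m P : ℝ) (hc₁ : 0 ≤ c₁) (hc₂ : 0 ≤ c₂)
    (hs : 0 ≤ s) (hr₁ : -P ≤ r₁) (hr₂ : -P ≤ r₂) :
    (c₁ + c₂) * (m - s) * P ≤ c₁ * (m * P + s * r₁) + c₂ * (m * P + s * r₂) := by
  have h₁ : 0 ≤ c₁ * (s * (r₁ + P)) := mul_nonneg hc₁ (mul_nonneg hs (by linarith))
  have h₂ : 0 ≤ c₂ * (s * (r₂ + P)) := mul_nonneg hc₂ (mul_nonneg hs (by linarith))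
  linear_combination h₁ + h₂

theorem pairwise_symbol_estimate_general (k k' : ℝ → ℝ)
    (hderiv : ∀ x ∈ Set.Ioi (0:ℝ), HasDerivAt k (k' x) x)
    (hconv : ConvexOn ℝ (Set.Ioi 0) k)
    (hmono : MonotoneOn k (Set.Ioi 0))
    (la lb : ℝ) (hla : 0 < la) (hlb : 0 < lb)
    (xa xb : ℂ) :
    let S : ℝ := (k' la - k' lb) / (la - lb)
    ((lb * S + k' la) * ((la + lb) / 2 * (‖xa‖ ^ 2 * ‖xb‖ ^ 2)
          + Real.sqrt (la * lb) * (xa ^ 2 * (starRingEnd ℂ xb) ^ 2).re)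
        + (la * S + k' lb) * ((la + lb) / 2 * (‖xa‖ ^ 2 * ‖xb‖ ^ 2)
          + Real.sqrt (la * lb) * (xb ^ 2 * (starRingEnd ℂ xa) ^ 2).re)
      ≥ ((la + lb) * S + k' la + k' lb) * ((la + lb) / 2 - Real.sqrt (la * lb))
          * (‖xa‖ ^ 2 * ‖xb‖ ^ 2))
    ∧ ((la + lb) * S + k' la + k' lb) * ((la + lb) / 2 - Real.sqrt (la * lb))
          * (‖xa‖ ^ 2 * ‖xb‖ ^ 2) ≥ 0 := by
  intro S
  have hk' : ∀ x ∈ Set.Ioi (0:ℝ), 0 ≤ k' x := fun x hx ↦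
    (hderiv x hx).nonneg_of_monotoneOn_of_mem_nhds hmono (isOpen_Ioi.mem_nhds hx)
  have hS : 0 ≤ S := by
    simpa only [slope_def_field] using
      (hconv.monotoneOn_of_hasDerivAt hderiv).slope_nonneg (Set.mem_Ioi.2 hlb) (Set.mem_Ioi.2 hla)
  have hc₁ : 0 ≤ lb * S + k' la := add_nonneg (mul_nonneg hlb.le hS) (hk' la hla)
  have hc₂ : 0 ≤ la * S + k' lb := add_nonneg (mul_nonneg hla.le hS) (hk' lb hlb)
  have hamgm := Real.sqrt_mul_le_add_div_two (add_pos hla hlb).le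
  have hsum := mul_sub_mul_le_of_neg_le ((la + lb) / 2) (‖xa‖ ^ 2 * ‖xb‖ ^ 2) hc₁ hc₂
    (Real.sqrt_nonneg (la * lb)) (Complex.neg_norm_sq_mul_norm_sq_le_re xa xb)
    (by simpa only [mul_comm] using Complex.neg_norm_sq_mul_norm_sq_le_re xb xa)
  constructor
  · linear_combination hsum
  · have hcoef : 0 ≤ (la + lb) * S + k' la + k' lb := by linarith
    exact mul_nonneg (mul_nonneg hcoef (sub_nonneg.2 hamgm)) (by positivity)

/-- The pairwise estimate from the ellipticity proof of the linearized real moment map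
equation, for a differentiable, convex, non-decreasing function `k` on `(0,∞)`. -/
theorem pairwise_symbol_estimate (k k' : ℝ → ℝ)
    (hderiv : ∀ x ∈ Set.Ioi (0:ℝ), HasDerivAt k (k' x) x)
    (hconv : ConvexOn ℝ (Set.Ioi 0) k)
    (hmono : MonotoneOn k (Set.Ioi 0))
    (la lb : ℝ) (hla : 0 < la) (hlb : 0 < lb) (hne : la ≠ lb)
    (xa xb : ℂ) :
    let S : ℝ := (k' la - k' lb) / (la - lb)
    ((lb * S + k' la) * ((la + lb) / 2 * (‖xa‖ ^ 2 * ‖xb‖ ^ 2)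
          + Real.sqrt (la * lb) * (xa ^ 2 * (starRingEnd ℂ xb) ^ 2).re)
        + (la * S + k' lb) * ((la + lb) / 2 * (‖xa‖ ^ 2 * ‖xb‖ ^ 2)
          + Real.sqrt (la * lb) * (xb ^ 2 * (starRingEnd ℂ xa) ^ 2).re)
      ≥ ((la + lb) * S + k' la + k' lb) * ((la + lb) / 2 - Real.sqrt (la * lb))
          * (‖xa‖ ^ 2 * ‖xb‖ ^ 2))
    ∧ ((la + lb) * S + k' la + k' lb) * ((la + lb) / 2 - Real.sqrt (la * lb))
          * (‖xa‖ ^ 2 * ‖xb‖ ^ 2) ≥ 0 :=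
  pairwise_symbol_estimate_general k k' hderiv hconv hmono la lb hla hlb xa xb
end

section
/- Let σ and μ be finite measures on a measurable space, let A₀ > 0, λ ∈ (0,1), C ≥ 0 and t ∈ [0,1] be real numbers, let v be a nonnegative function integrable with respect to both σ and μ, and let B be a measurable function with |B| ≤ C μ-almost everywhere and B·v μ-integrable. If ∫ v dσ − A₀·∫ v dμ ≥ λ·∫ v dσ, then ∫ v dσ − ∫ (A₀ + t·B)·v dμ ≥ (λ − C·(1−λ)/A₀)·∫ v dσ. -/
open MeasureTheory

section

variable {α : Type*} [MeasurableSpace α] {μ : Measure α} {v B : α → ℝ} {C : ℝ}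

theorem integral_mul_le_const_mul_integral (hv : ∀ᵐ x ∂μ, 0 ≤ v x) (hvμ : Integrable v μ)
    (hBv : Integrable (fun x => B x * v x) μ) (hB : ∀ᵐ x ∂μ, B x ≤ C) :
    ∫ x, B x * v x ∂μ ≤ C * ∫ x, v x ∂μ := by
  rw [← integral_const_mul]
  refine integral_mono_ae hBv (hvμ.const_mul C) ?_
  filter_upwards [hv, hB] with x hvx hBx
  exact mul_le_mul_of_nonneg_right hBx hvx

theorem integral_add_mul_mul_le (A : ℝ) {t : ℝ} (ht : t ∈ Set.Icc (0 : ℝ) 1) (hC : 0 ≤ C)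
    (hv : ∀ᵐ x ∂μ, 0 ≤ v x) (hvμ : Integrable v μ)
    (hBv : Integrable (fun x => B x * v x) μ) (hB : ∀ᵐ x ∂μ, B x ≤ C) :
    ∫ x, (A + t * B x) * v x ∂μ ≤ (A + C) * ∫ x, v x ∂μ := by
  have hsplit : ∫ x, (A + t * B x) * v x ∂μ = A * ∫ x, v x ∂μ + t * ∫ x, B x * v x ∂μ := by
    simp_rw [add_mul, mul_assoc]
    rw [integral_add (hvμ.const_mul A) (hBv.const_mul t), integral_const_mul, integral_const_mul]
  have hCv : 0 ≤ C * ∫ x, v x ∂μ := mul_nonneg hC (integral_nonneg_of_ae hv)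
  have hperturb : t * ∫ x, B x * v x ∂μ ≤ C * ∫ x, v x ∂μ :=
    calc t * ∫ x, B x * v x ∂μ
        ≤ t * (C * ∫ x, v x ∂μ) :=
          mul_le_mul_of_nonneg_left (integral_mul_le_const_mul_integral hv hvμ hBv hB) ht.1
      _ ≤ C * ∫ x, v x ∂μ := mul_le_of_le_one_left hCv ht.2
  rw [hsplit, add_mul]
  linarith

end

theorem uniform_stability_perturbation_general {α : Type*} [MeasurableSpace α]
    (σ μ : Measure α)
    (A0 : ℝ) (hA0 : 0 < A0) (lam : ℝ)
    (C : ℝ) (hC : 0 ≤ C) (t : ℝ) (ht : t ∈ Set.Icc (0:ℝ) 1)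
    (v : α → ℝ) (hv : ∀ x, 0 ≤ v x)
    (hvμ : Integrable v μ)
    (B : α → ℝ)
    (hBbound : ∀ᵐ x ∂μ, |B x| ≤ C)
    (hBv : Integrable (fun x => B x * v x) μ)
    (hstab : (∫ x, v x ∂σ) - A0 * ∫ x, v x ∂μ ≥ lam * ∫ x, v x ∂σ) :
    (∫ x, v x ∂σ) - (∫ x, (A0 + t * B x) * v x ∂μ)
      ≥ (lam - C * (1 - lam) / A0) * ∫ x, v x ∂σ := by
  have hperturbed := integral_add_mul_mul_le A0 ht hC (.of_forall hv) hvμ hBv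
    (hBbound.mono fun x hx => (le_abs_self _).trans hx)
  have hμ : A0 * ∫ x, v x ∂μ ≤ (1 - lam) * ∫ x, v x ∂σ := by linarith
  have hCμ : C * ∫ x, v x ∂μ ≤ C * (1 - lam) / A0 * ∫ x, v x ∂σ :=
    calc C * ∫ x, v x ∂μ = C / A0 * (A0 * ∫ x, v x ∂μ) := by field_simp
      _ ≤ C / A0 * ((1 - lam) * ∫ x, v x ∂σ) := by gcongr
      _ = C * (1 - lam) / A0 * ∫ x, v x ∂σ := by ring
  rw [add_mul] at hperturbed
  linarith

/-- Perturbation of uniform stability: if `(σ, A₀·μ)` is uniformly stable with constant `λ`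
for the nonnegative function `v`, then the perturbed density `A₀ + t·B`, with `|B| ≤ C`
μ-a.e., is uniformly stable with constant `λ − C(1−λ)/A₀`. -/
theorem uniform_stability_perturbation {α : Type*} [MeasurableSpace α]
    (σ μ : Measure α) [IsFiniteMeasure σ] [IsFiniteMeasure μ]
    (A0 : ℝ) (hA0 : 0 < A0) (lam : ℝ) (hlam : lam ∈ Set.Ioo (0:ℝ) 1)
    (C : ℝ) (hC : 0 ≤ C) (t : ℝ) (ht : t ∈ Set.Icc (0:ℝ) 1)
    (v : α → ℝ) (hv : ∀ x, 0 ≤ v x)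
    (hvσ : Integrable v σ) (hvμ : Integrable v μ)
    (B : α → ℝ) (hBmeas : Measurable B)
    (hBbound : ∀ᵐ x ∂μ, |B x| ≤ C)
    (hBv : Integrable (fun x => B x * v x) μ)
    (hstab : (∫ x, v x ∂σ) - A0 * ∫ x, v x ∂μ ≥ lam * ∫ x, v x ∂σ) :
    (∫ x, v x ∂σ) - (∫ x, (A0 + t * B x) * v x ∂μ)
      ≥ (lam - C * (1 - lam) / A0) * ∫ x, v x ∂σ :=
  uniform_stability_perturbation_general σ μ A0 hA0 lam C hC t ht v hv hvμ B hBbound hBv hstab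
end

section
/- Let X and Y be n×n real symmetric matrices, let A be the 2n×2n real matrix with block form A = [[X, Y],[Y, −X]], and let M = (X + iY)·(X − iY) as an n×n complex matrix. Then M is Hermitian positive semidefinite, and the characteristic polynomial of A² (regarded as a complex matrix) equals the square of the characteristic polynomial of M. -/
/-! Over a commutative ring containing `i` with `i * i = -1`, elementary block operations make
`[[a, -b], [b, a]]` block lower triangular with diagonal blocks `a - i b` and `a + i b`. Applied to
the characteristic matrix of `[[S, T], [-T, S]]`, this splits its characteristic polynomial as
`χ (S + i T) · χ (S - i T)`. For `A = [[X, Y], [Y, -X]]` we have `A² = [[S, T], [-T, S]]` with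
`S = X² + Y²` and `T = XY - YX`, and the two factors become `χ (Z̄ Z)` and `χ (Z Z̄)` for
`Z = X + i Y`, which agree since `χ (PQ) = χ (QP)`. Positivity holds because `M = Z Zᴴ`: for real
symmetric `X`, `Y` the conjugate transpose of `Z` is `Z̄`. -/

open Polynomial

namespace Matrix

theorem IsSymm.isHermitian_map_ofReal {n : Type*} {X : Matrix n n ℝ} (hX : X.IsSymm) :
    (X.map Complex.ofReal).IsHermitian :=
  (isHermitian_iff_isSymm.mpr hX).map _ fun _ => by simp

variable {n R : Type*} [Fintype n] [DecidableEq n] [CommRing R]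

theorem det_fromBlocks_neg_eq_det_mul_det {i : R} (hi : i * i = -1) (a b : Matrix n n R) :
    (fromBlocks a (-b) b a).det = (a - i • b).det * (a + i • b).det := by
  have hL : (fromBlocks 1 (-i • 1) 0 1 : Matrix (n ⊕ n) (n ⊕ n) R).det = 1 := by simp
  have hR : (fromBlocks 1 (i • 1) 0 1 : Matrix (n ⊕ n) (n ⊕ n) R).det = 1 := by simp
  have hLR : fromBlocks 1 (-i • 1) 0 1 * fromBlocks a (-b) b a * fromBlocks 1 (i • 1) 0 1 =
      fromBlocks (a - i • b) 0 b (a + i • b) := by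
    simp only [fromBlocks_multiply]
    congr 1 <;>
      simp only [one_mul, mul_one, zero_mul, mul_zero, zero_add, add_zero, neg_zero, mul_neg,
        neg_mul, neg_smul, smul_mul_assoc, mul_smul_comm, smul_add, smul_neg, smul_smul, hi,
        one_smul, neg_neg] <;>
      abel
  rw [← det_fromBlocks_zero₁₂, ← hLR, det_mul, det_mul, hL, hR, one_mul, mul_one]

theorem charmatrix_add_smul (S T : Matrix n n R) (c : R) :
    charmatrix (S + c • T) = charmatrix S - C c • T.map C := by
  rw [charmatrix, charmatrix, map_add, sub_add_eq_sub_sub]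
  congr 1
  ext
  simp

theorem charpoly_fromBlocks_neg_eq_charpoly_mul_charpoly {i : R} (hi : i * i = -1)
    (S T : Matrix n n R) :
    (fromBlocks S T (-T) S).charpoly = (S + i • T).charpoly * (S - i • T).charpoly := by
  have hiC : C i * C i = -1 := by rw [← C_mul, hi, C_neg, C_1]
  rw [charpoly, charmatrix_fromBlocks, Matrix.map_neg _ fun _ => C_neg, neg_neg,
    det_fromBlocks_neg_eq_det_mul_det hiC, sub_eq_add_neg S, ← neg_smul, charpoly, charpoly,
    charmatrix_add_smul, charmatrix_add_smul, C_neg, neg_smul, sub_neg_eq_add]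

omit [DecidableEq n] in
theorem fromBlocks_mul_self (X Y : Matrix n n R) :
    fromBlocks X Y Y (-X) * fromBlocks X Y Y (-X) =
      fromBlocks (X * X + Y * Y) (X * Y - Y * X) (-(X * Y - Y * X)) (X * X + Y * Y) := by
  simp only [fromBlocks_multiply]
  congr 1 <;> noncomm_ring

omit [DecidableEq n] in
theorem add_smul_mul_sub_smul {i : R} (hi : i * i = -1) (X Y : Matrix n n R) :
    (X + i • Y) * (X - i • Y) = X * X + Y * Y - i • (X * Y - Y * X) := by
  simp only [add_mul, mul_sub, smul_mul_assoc, mul_smul_comm, smul_add, smul_smul, hi]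
  module

theorem charpoly_fromBlocks_mul_self {i : R} (hi : i * i = -1) (X Y : Matrix n n R) :
    (fromBlocks X Y Y (-X) * fromBlocks X Y Y (-X)).charpoly =
      ((X + i • Y) * (X - i • Y)).charpoly ^ 2 := by
  have hZZbar := add_smul_mul_sub_smul hi X Y
  have hZbarZ : (X - i • Y) * (X + i • Y) = X * X + Y * Y + i • (X * Y - Y * X) := by
    have := add_smul_mul_sub_smul (i := -i) (by rw [neg_mul_neg, hi]) X Y
    simpa only [neg_smul, sub_neg_eq_add, ← sub_eq_add_neg] using this
  rw [fromBlocks_mul_self, charpoly_fromBlocks_neg_eq_charpoly_mul_charpoly hi, ← hZZbar,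
    ← hZbarZ, charpoly_mul_comm, sq]

end Matrix

open ComplexOrder

/-- For real symmetric `X, Y`, the block matrix `A = [[X,Y],[Y,−X]]` and the complex
matrix `M = (X+iY)(X−iY)` satisfy: `M` is Hermitian positive semidefinite, and the
characteristic polynomial of `A²` (over `ℂ`) is the square of that of `M`. -/
theorem block_square_charpoly (n : ℕ) (X Y : Matrix (Fin n) (Fin n) ℝ)
    (hX : X.transpose = X) (hY : Y.transpose = Y) :
    let A : Matrix (Fin n ⊕ Fin n) (Fin n ⊕ Fin n) ℝ := Matrix.fromBlocks X Y Y (-X)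
    let M : Matrix (Fin n) (Fin n) ℂ :=
      (X.map (Complex.ofReal) + Complex.I • Y.map (Complex.ofReal)) *
        (X.map (Complex.ofReal) - Complex.I • Y.map (Complex.ofReal))
    M.PosSemidef ∧ ((A * A).map (algebraMap ℝ ℂ)).charpoly = M.charpoly ^ 2 := by
  intro A M
  set X' := X.map Complex.ofReal
  set Y' := Y.map Complex.ofReal
  have hZ : (X' + Complex.I • Y').conjTranspose = X' - Complex.I • Y' := by
    rw [Matrix.conjTranspose_add, Matrix.conjTranspose_smul,
      (Matrix.IsSymm.isHermitian_map_ofReal hX).eq, (Matrix.IsSymm.isHermitian_map_ofReal hY).eq,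
      Complex.star_def, Complex.conj_I, neg_smul, sub_eq_add_neg]
  have hA : A.map (algebraMap ℝ ℂ) = Matrix.fromBlocks X' Y' Y' (-X') := by
    simp only [A, X', Y', Complex.coe_algebraMap, Matrix.fromBlocks_map,
      Matrix.map_neg _ Complex.ofReal_neg]
  refine ⟨?_, ?_⟩
  · simpa only [M, hZ] using Matrix.posSemidef_self_mul_conjTranspose (X' + Complex.I • Y')
  · rw [Matrix.map_mul, hA, Matrix.charpoly_fromBlocks_mul_self Complex.I_mul_I]
end
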